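/- For any finite poset P of height h and any k ≥ 2, every subfamily of the k-interval chain C_k^0 of size at least |P| + (h−1)(3k−5)·2^{k−2} contains P as a weak subposet; equivalently α(C_k^0, P) ≤ |P| + (h−1)(3k−5)·2^{k−2} − 1. -/

import Mathlib

/-- A family `𝒜 ⊆ 2^[n]` contains the poset `P` as a weak subposet. -/
def containsWeak {n : ℕ} (𝒜 : Finset (Finset (Fin n))) (P : Type*) [PartialOrder P] : Prop :=
  ∃ φ : P → Finset (Fin n), Function.Injective φ ∧ (∀ x, φ x ∈ 𝒜) ∧
    ∀ x y : P, x ≤ y → φ x ⊆ φ y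

/-- `h` is the height of the poset `P`: the maximum size of a chain in `P`. -/
def isHeight (P : Type*) [PartialOrder P] (h : ℕ) : Prop :=
  (∃ s : Finset P, IsChain (· ≤ ·) (s : Set P) ∧ s.card = h) ∧
  ∀ s : Finset P, IsChain (· ≤ ·) (s : Set P) → s.card ≤ h

/-- The initial segment `{1,…,i}` of `[n]`, as a subset of `Fin n`. -/
def initSeg (n i : ℕ) : Finset (Fin n) := Finset.univ.filter (fun x => (x : ℕ) < i)

/-- The `k`-interval chain `C_k^0 = ⋃_{i=0}^{n-k} [[i],[i+k]]`. -/
def intervalChain (n k : ℕ) : Finset (Finset (Fin n)) :=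
  (Finset.range (n - k + 1)).biUnion (fun i => Finset.Icc (initSeg n i) (initSeg n (i + k)))

/-!
Sort the elements of `P` by height: level `j` has `m j` elements, and `x < y` forces a strictly
higher level. It therefore suffices to find blocks `B 0, …, B (h - 1)` in `𝒮` with
`m j ≤ #(B j)` such that every set of an earlier block is strictly contained in every set of a
later one; each level is then mapped injectively into its block.

The blocks are split off one by one, cutting `𝒮` at an initial segment `[t]`: the sets strictly
inside `[t]` (or inside `[t]`, when `[t]` itself is still needed) go below, the sets containing
`[t]` go above, and the sets incomparable with `[t]` are lost. For the least `t` that leaves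
enough sets below, the lower block overshoots by at most `2^(k-1) - 2`, because passing from
`[t]` to `[t + 1]` only adds sets `[t + 1 - k] ∪ {t} ∪ T`; and at most `(k-2) 2^(k-1) + 1` sets
cross `[t]`: grouped by their first missing element `t - 1 - j`, each group has at most
`2^(k-1) - 2^j` members. So a cut wastes at most `(k-1) 2^(k-1) - 1 ≤ (3k-5) 2^(k-2)` sets.
-/

open Finset

section InitSeg

variable {n : ℕ}

@[simp] lemma mem_initSeg {i : ℕ} {x : Fin n} : x ∈ initSeg n i ↔ (x : ℕ) < i := by
  simp [initSeg]

lemma initSeg_mono : Monotone (initSeg n) := fun _ _ hij _ hx => by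
  rw [mem_initSeg] at *
  omega

lemma initSeg_zero : initSeg n 0 = ∅ := by
  ext x
  simp

lemma initSeg_of_le {i : ℕ} (h : n ≤ i) : initSeg n i = univ := by
  ext x
  simp only [mem_initSeg, mem_univ, iff_true]
  omega

lemma lt_of_not_initSeg_subset {a b : ℕ} (h : ¬ initSeg n a ⊆ initSeg n b) : b < a :=
  lt_of_not_ge fun hba => h (initSeg_mono hba)

lemma card_initSeg (i : ℕ) : #(initSeg n i) = min i n := by
  rw [← card_range (min i n), ← card_image_of_injective _ Fin.val_injective]
  congr 1
  ext j
  simp only [mem_image, mem_initSeg, mem_range, lt_min_iff]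
  exact ⟨fun ⟨x, hx, hxj⟩ => hxj ▸ ⟨hx, x.isLt⟩, fun ⟨hi, hn⟩ => ⟨⟨j, hn⟩, hi, rfl⟩⟩

lemma card_initSeg_sdiff_initSeg (i j : ℕ) :
    #(initSeg n j \ initSeg n i) = min j n - min i n := by
  rcases le_total i j with hij | hji
  · rw [card_sdiff_of_subset (initSeg_mono hij), card_initSeg, card_initSeg]
  · rw [sdiff_eq_empty_iff_subset.2 (initSeg_mono hji), card_empty]
    omega

lemma exists_initSeg_subset_not_initSeg_subset {S : Finset (Fin n)} {t : ℕ}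
    (h : ¬ initSeg n t ⊆ S) : ∃ a < t, initSeg n a ⊆ S ∧ ¬ initSeg n (a + 1) ⊆ S := by
  induction t with
  | zero => simp [initSeg_zero] at h
  | succ t ih =>
    by_cases ht : initSeg n t ⊆ S
    · exact ⟨t, t.lt_add_one, ht, h⟩
    · obtain ⟨a, hat, ha⟩ := ih ht
      exact ⟨a, hat.trans t.lt_add_one, ha⟩

end InitSeg

section IntervalChain

variable {n k : ℕ} {S : Finset (Fin n)}

lemma exists_of_mem_intervalChain (hS : S ∈ intervalChain n k) :
    ∃ i, initSeg n i ⊆ S ∧ S ⊆ initSeg n (i + k) := by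
  simp only [intervalChain, mem_biUnion, mem_Icc] at hS
  obtain ⟨i, -, hi⟩ := hS
  exact ⟨i, hi⟩

lemma initSeg_subset_of_mem_intervalChain (hS : S ∈ intervalChain n k) {x : ℕ}
    (hx : ¬ S ⊆ initSeg n x) : initSeg n (x + 1 - k) ⊆ S := by
  obtain ⟨i, hiS, hSi⟩ := exists_of_mem_intervalChain hS
  have : x < i + k := lt_of_not_initSeg_subset fun h => hx (hSi.trans h)
  exact (initSeg_mono (by omega)).trans hiS

lemma subset_initSeg_of_mem_intervalChain (hS : S ∈ intervalChain n k) {a : ℕ}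
    (ha : ¬ initSeg n a ⊆ S) : S ⊆ initSeg n (a + k - 1) := by
  obtain ⟨i, hiS, hSi⟩ := exists_of_mem_intervalChain hS
  have : i < a := lt_of_not_initSeg_subset fun h => ha (h.trans hiS)
  exact hSi.trans (initSeg_mono (by omega))

end IntervalChain

section Counting

variable {α : Type*} [DecidableEq α]

lemma card_Ico_union {L V : Finset α} (h : Disjoint L V) : #(Ico L (L ∪ V)) = 2 ^ #V - 1 := by
  rw [card_Ico_finset subset_union_left, card_union_of_disjoint h, Nat.add_sub_cancel_left]

lemma card_Icc_union_sdiff_Icc_union {L V V' : Finset α} (h : Disjoint L V) (hV : V' ⊆ V) :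
    #(Icc L (L ∪ V) \ Icc L (L ∪ V')) = 2 ^ #V - 2 ^ #V' := by
  rw [card_sdiff_of_subset (Icc_subset_Icc_right (union_subset_union_right hV)),
    card_Icc_finset subset_union_left, card_Icc_finset subset_union_left,
    card_union_of_disjoint h, card_union_of_disjoint (h.mono_right hV),
    Nat.add_sub_cancel_left, Nat.add_sub_cancel_left]

lemma sum_range_two_pow_sub_two_pow_le (m : ℕ) :
    ∑ j ∈ range m, (2 ^ m - 2 ^ j) ≤ (m - 1) * 2 ^ m + 1 := by
  have hgeom : ∑ j ∈ range m, 2 ^ j = 2 ^ m - 1 := by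
    simpa using Nat.geomSum_eq le_rfl m
  rw [sum_tsub_distrib _ fun j hj => Nat.pow_le_pow_right two_pos (mem_range.1 hj).le,
    sum_const, card_range, smul_eq_mul, hgeom, Nat.sub_one_mul]
  omega

def crossing (𝒮 : Finset (Finset α)) (A : Finset α) : Finset (Finset α) :=
  {S ∈ 𝒮 | ¬ S ⊆ A ∧ ¬ A ⊆ S}

lemma card_le_ssubset_add_supset_add_crossing (𝒮 : Finset (Finset α)) (A : Finset α) :
    #𝒮 ≤ #{S ∈ 𝒮 | S ⊂ A} + #{S ∈ 𝒮 | A ⊆ S} + #(crossing 𝒮 A) := by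
  calc #𝒮 ≤ #({S ∈ 𝒮 | S ⊂ A} ∪ {S ∈ 𝒮 | A ⊆ S} ∪ crossing 𝒮 A) :=
        card_le_card fun S hS => by
          simp only [crossing, mem_union, mem_filter, ssubset_iff_subset_not_subset]
          tauto
    _ ≤ _ := (card_union_le _ _).trans (by gcongr; exact card_union_le _ _)

lemma card_le_subset_add_ssupset_add_crossing (𝒮 : Finset (Finset α)) (A : Finset α) :
    #𝒮 ≤ #{S ∈ 𝒮 | S ⊆ A} + #{S ∈ 𝒮 | A ⊂ S} + #(crossing 𝒮 A) := by
  calc #𝒮 ≤ #({S ∈ 𝒮 | S ⊆ A} ∪ {S ∈ 𝒮 | A ⊂ S} ∪ crossing 𝒮 A) :=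
        card_le_card fun S hS => by
          simp only [crossing, mem_union, mem_filter, ssubset_iff_subset_not_subset]
          tauto
    _ ≤ _ := (card_union_le _ _).trans (by gcongr; exact card_union_le _ _)

end Counting

section IntervalChainCounting

variable {n k : ℕ} {𝒮 : Finset (Finset (Fin n))}

lemma card_filter_ssubset_initSeg_succ_le (h𝒮 : 𝒮 ⊆ intervalChain n k) (t : ℕ) :
    #{S ∈ 𝒮 | S ⊂ initSeg n (t + 1)} ≤ #{S ∈ 𝒮 | S ⊆ initSeg n t} + (2 ^ (k - 1) - 1) := by
  set V := initSeg n t \ initSeg n (t + 1 - k)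
  set L := initSeg n (t + 1) \ V
  have hLV : L ∪ V = initSeg n (t + 1) :=
    sdiff_union_of_subset (sdiff_subset.trans (initSeg_mono t.le_succ))
  have hsub : {S ∈ 𝒮 | S ⊂ initSeg n (t + 1)} ⊆ {S ∈ 𝒮 | S ⊆ initSeg n t} ∪ Ico L (L ∪ V) := by
    intro S hS
    rw [mem_filter] at hS
    rw [mem_union, mem_filter, mem_Ico, hLV]
    refine or_iff_not_imp_left.2 fun hSt => ⟨fun x hx => ?_, hS.2⟩
    replace hSt : ¬ S ⊆ initSeg n t := fun h => hSt ⟨hS.1, h⟩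
    -- `S` contains the element `t` and, lying in the interval chain, all of `[t + 1 - k]`
    obtain ⟨y, hyS, hyt⟩ := not_subset.1 hSt
    have hy : (y : ℕ) = t := by
      have := hS.2.1 hyS
      simp only [mem_initSeg] at this hyt
      omega
    simp only [L, V, mem_sdiff, mem_initSeg, not_and, not_not] at hx
    by_cases hxt : (x : ℕ) < t
    · exact initSeg_subset_of_mem_intervalChain (h𝒮 hS.1) hSt (mem_initSeg.2 (hx.2 hxt))
    · have hxy : x = y := Fin.ext (by omega)
      exact hxy ▸ hyS
  have hV : #V ≤ k - 1 := by
    rw [card_initSeg_sdiff_initSeg]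
    omega
  calc _ ≤ _ := card_le_card hsub
    _ ≤ _ := card_union_le _ _
    _ ≤ _ := by
      rw [card_Ico_union disjoint_sdiff_self_left]
      gcongr
      exact one_le_two

lemma card_filter_crossing_gap_le (h𝒮 : 𝒮 ⊆ intervalChain n k) {t j : ℕ} (htn : t ≤ n)
    (hjt : j < t) (hjk : j < k - 1) :
    #{S ∈ crossing 𝒮 (initSeg n t) | initSeg n (t - 1 - j) ⊆ S ∧ ¬ initSeg n (t - j) ⊆ S} ≤
      2 ^ (k - 1) - 2 ^ j := by
  set L := initSeg n (t - 1 - j)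
  set V := initSeg n (t - j + k - 1) \ initSeg n (t - j)
  set V' := initSeg n t \ initSeg n (t - j)
  have hLV : Disjoint L V := disjoint_left.2 fun x hxL hxV => by
    simp only [L, V, mem_sdiff, mem_initSeg] at hxL hxV
    omega
  have hV'V : V' ⊆ V := sdiff_subset_sdiff (initSeg_mono (by omega)) subset_rfl
  have hsub : {S ∈ crossing 𝒮 (initSeg n t) | L ⊆ S ∧ ¬ initSeg n (t - j) ⊆ S} ⊆
      Icc L (L ∪ V) \ Icc L (L ∪ V') := by
    intro S hS
    simp only [crossing, mem_filter] at hS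
    obtain ⟨⟨hS𝒮, hSt, -⟩, hLS, hgap⟩ := hS
    have hSV : S ⊆ L ∪ V := fun x hx => by
      have hxk := subset_initSeg_of_mem_intervalChain (h𝒮 hS𝒮) hgap hx
      have hx' : (x : ℕ) ≠ t - 1 - j := fun hxj => hgap fun y hy => by
        rw [mem_initSeg] at hy
        rcases (by omega : (y : ℕ) < t - 1 - j ∨ y = x) with hy | rfl
        exacts [hLS (mem_initSeg.2 hy), hx]
      simp only [L, V, mem_union, mem_sdiff, mem_initSeg] at hxk ⊢
      omega
    have hLV' : L ∪ V' ⊆ initSeg n t :=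
      union_subset (initSeg_mono (by omega)) sdiff_subset
    simp only [mem_sdiff, mem_Icc]
    exact ⟨⟨hLS, hSV⟩, fun h => hSt (h.2.trans hLV')⟩
  calc _ ≤ _ := card_le_card hsub
    _ = 2 ^ #V - 2 ^ #V' := card_Icc_union_sdiff_Icc_union hLV hV'V
    _ ≤ 2 ^ (k - 1) - 2 ^ j := by
      have hV : #V ≤ k - 1 := by
        rw [card_initSeg_sdiff_initSeg]
        omega
      have hV' : #V' = j := by
        rw [card_initSeg_sdiff_initSeg]
        omega
      rw [hV']
      gcongr
      exact one_le_two

lemma card_crossing_initSeg_le (h𝒮 : 𝒮 ⊆ intervalChain n k) {t : ℕ} (htn : t ≤ n) :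
    #(crossing 𝒮 (initSeg n t)) ≤ (k - 2) * 2 ^ (k - 1) + 1 := by
  set fiber : ℕ → Finset (Finset (Fin n)) := fun j =>
    {S ∈ crossing 𝒮 (initSeg n t) | initSeg n (t - 1 - j) ⊆ S ∧ ¬ initSeg n (t - j) ⊆ S}
  have hcover : crossing 𝒮 (initSeg n t) ⊆ (range (min (k - 1) t)).biUnion fiber := by
    intro S hS
    obtain ⟨hS𝒮, hSt, htS⟩ := mem_filter.1 hS
    obtain ⟨a, hat, haS, hgap⟩ := exists_initSeg_subset_not_initSeg_subset htS
    have hak : t < a + 1 + k - 1 := lt_of_not_initSeg_subset fun h =>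
      hSt ((subset_initSeg_of_mem_intervalChain (h𝒮 hS𝒮) hgap).trans h)
    rw [mem_biUnion]
    refine ⟨t - 1 - a, mem_range.2 (by omega), mem_filter.2 ⟨hS, ?_⟩⟩
    rw [show t - 1 - (t - 1 - a) = a by omega, show t - (t - 1 - a) = a + 1 by omega]
    exact ⟨haS, hgap⟩
  calc _ ≤ _ := card_le_card hcover
    _ ≤ ∑ j ∈ range (min (k - 1) t), #(fiber j) := card_biUnion_le
    _ ≤ ∑ j ∈ range (min (k - 1) t), (2 ^ (k - 1) - 2 ^ j) := sum_le_sum fun j hj => by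
      rw [mem_range, lt_min_iff] at hj
      exact card_filter_crossing_gap_le h𝒮 htn hj.2 hj.1
    _ ≤ ∑ j ∈ range (k - 1), (2 ^ (k - 1) - 2 ^ j) :=
      sum_le_sum_of_subset (range_subset_range.2 (min_le_left _ _))
    _ ≤ (k - 2) * 2 ^ (k - 1) + 1 := sum_range_two_pow_sub_two_pow_le (k - 1)

end IntervalChainCounting

section Cut

variable {n k : ℕ} {𝒮 : Finset (Finset (Fin n))}

lemma exists_initSeg_threshold {m : ℕ} (hm : m ≤ #𝒮) :
    ∃ t ≤ n, m ≤ #{S ∈ 𝒮 | S ⊆ initSeg n t} ∧ ∀ s < t, #{S ∈ 𝒮 | S ⊆ initSeg n s} < m := by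
  have hn : m ≤ #{S ∈ 𝒮 | S ⊆ initSeg n n} := by
    rwa [initSeg_of_le le_rfl, filter_true_of_mem fun S _ => subset_univ S]
  have hex : ∃ t, m ≤ #{S ∈ 𝒮 | S ⊆ initSeg n t} := ⟨n, hn⟩
  exact ⟨Nat.find hex, Nat.find_min' hex hn, Nat.find_spec hex,
    fun s hs => not_le.1 (Nat.find_min hex hs)⟩

lemma two_pow_pred_add_mul_le (hk : 2 ≤ k) :
    2 ^ (k - 1) + (k - 2) * 2 ^ (k - 1) ≤ (3 * k - 5) * 2 ^ (k - 2) + 1 := by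
  obtain ⟨k, rfl⟩ : ∃ k', k = k' + 2 := ⟨k - 2, by omega⟩
  simp only [show k + 2 - 1 = k + 1 by omega, Nat.add_sub_cancel, pow_succ]
  rcases k with _ | k
  · simp
  · have : 1 ≤ 2 ^ (k + 1) := Nat.one_le_two_pow
    rw [show 3 * (k + 1 + 2) - 5 = 3 * k + 4 by omega]
    nlinarith

theorem exists_cut (hk : 2 ≤ k) (h𝒮 : 𝒮 ⊆ intervalChain n k) {m : ℕ} (hm : m ≤ #𝒮) :
    ∃ 𝓛 ⊆ 𝒮, ∃ 𝓤 ⊆ 𝒮, m ≤ #𝓛 ∧ #𝒮 ≤ m + #𝓤 + (3 * k - 5) * 2 ^ (k - 2) ∧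
      ∀ S ∈ 𝓛, ∀ T ∈ 𝓤, S ⊂ T := by
  obtain ⟨t, htn, hclosed, hmin⟩ := exists_initSeg_threshold hm
  have hX := card_crossing_initSeg_le h𝒮 htn
  have harith := two_pow_pred_add_mul_le hk
  have hpow : 2 ≤ 2 ^ (k - 1) := Nat.le_self_pow (by omega) 2
  by_cases hopen : m ≤ #{S ∈ 𝒮 | S ⊂ initSeg n t}
  · have hnew : #{S ∈ 𝒮 | S ⊂ initSeg n t} + 1 ≤ m + (2 ^ (k - 1) - 1) := by
      rcases t with _ | t
      · rw [initSeg_zero, filter_false_of_mem fun S _ => S.not_ssubset_empty, card_empty]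
        omega
      · have := card_filter_ssubset_initSeg_succ_le h𝒮 t
        have := hmin t t.lt_add_one
        omega
    refine ⟨{S ∈ 𝒮 | S ⊂ initSeg n t}, filter_subset _ _, {S ∈ 𝒮 | initSeg n t ⊆ S},
      filter_subset _ _, hopen, ?_,
      fun S hS T hT => (mem_filter.1 hS).2.trans_subset (mem_filter.1 hT).2⟩
    have := card_le_ssubset_add_supset_add_crossing 𝒮 (initSeg n t)
    omega
  · have hone : #{S ∈ 𝒮 | S ⊆ initSeg n t} ≤ #{S ∈ 𝒮 | S ⊂ initSeg n t} + 1 := by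
      refine (card_le_card fun S hS => ?_).trans (card_insert_le (initSeg n t) _)
      rw [mem_filter] at hS
      rw [mem_insert, mem_filter]
      exact (eq_or_ne S _).imp id fun hne => ⟨hS.1, hS.2.ssubset_of_ne hne⟩
    refine ⟨{S ∈ 𝒮 | S ⊆ initSeg n t}, filter_subset _ _, {S ∈ 𝒮 | initSeg n t ⊂ S},
      filter_subset _ _, hclosed, ?_,
      fun S hS T hT => (mem_filter.1 hS).2.trans_ssubset (mem_filter.1 hT).2⟩
    have := card_le_subset_add_ssupset_add_crossing 𝒮 (initSeg n t)
    omega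

theorem exists_blocks (hk : 2 ≤ k) (h : ℕ) (𝒮 : Finset (Finset (Fin n)))
    (h𝒮 : 𝒮 ⊆ intervalChain n k) (m : ℕ → ℕ)
    (hm : ∑ j ∈ range h, m j + (h - 1) * ((3 * k - 5) * 2 ^ (k - 2)) ≤ #𝒮) :
    ∃ B : ℕ → Finset (Finset (Fin n)), (∀ j, B j ⊆ 𝒮) ∧ (∀ j < h, m j ≤ #(B j)) ∧
      ∀ i j, i < j → ∀ S ∈ B i, ∀ T ∈ B j, S ⊂ T := by
  induction h generalizing 𝒮 m with
  | zero => exact ⟨fun _ => ∅, fun _ => empty_subset _, by simp, by simp⟩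
  | succ h ih =>
    rw [sum_range_succ'] at hm
    obtain ⟨𝓛, h𝓛, 𝓤, h𝓤, hm𝓛, h𝒮𝓤, hlt⟩ := exists_cut hk h𝒮 (m := m 0) (by omega)
    have hm𝓤 : ∑ j ∈ range h, m (j + 1) + (h - 1) * ((3 * k - 5) * 2 ^ (k - 2)) ≤ #𝓤 := by
      rcases h with _ | h
      · simp
      · simp only [Nat.add_sub_cancel, add_one_mul] at hm ⊢
        omega
    obtain ⟨B, hB𝓤, hmB, hBlt⟩ := ih 𝓤 (h𝓤.trans h𝒮) (fun j => m (j + 1)) hm𝓤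
    refine ⟨fun | 0 => 𝓛 | j + 1 => B j, ?_, ?_, ?_⟩
    · rintro (_ | j)
      exacts [h𝓛, (hB𝓤 j).trans h𝓤]
    · rintro (_ | j) hj
      exacts [hm𝓛, hmB j (by omega)]
    · rintro (_ | i) (_ | j) hij S hS T hT
      · omega
      · exact hlt S hS T (hB𝓤 j hT)
      · omega
      · exact hBlt i j (by omega) S hS T hT

end Cut

section Poset

variable {P : Type*} [PartialOrder P]

lemma exists_strictMono_lt_of_isHeight {h : ℕ} (hh : isHeight P h) :
    ∃ lev : P → ℕ, StrictMono lev ∧ ∀ x, lev x < h := by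
  have hlen : ∀ p : LTSeries P, p.length < h := fun p => by
    have := hh.2 (univ.map ⟨p, p.strictMono.injective⟩) (by
      rw [coe_map, coe_univ, Set.image_univ]
      exact p.strictMono.monotone.isChain_range)
    rwa [card_map, card_univ, Fintype.card_fin] at this
  have hfin : ∀ x : P, Order.height x ≠ ⊤ := fun x =>
    ne_top_of_le_ne_top (ENat.natCast_ne_top h)
      (Order.height_le fun p _ => by exact_mod_cast (hlen p).le)
  refine ⟨fun x => (Order.height x).toNat, fun x y hxy => ?_, fun x => ?_⟩
  · have := Order.height_add_one_le hxy
    rw [← ENat.natCast_toNat (hfin x), ← ENat.natCast_toNat (hfin y)] at this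
    exact_mod_cast this
  · obtain ⟨p, -, hp⟩ := Order.exists_series_of_height_eq_coe x (ENat.natCast_toNat (hfin x)).symm
    simpa only [hp] using hlen p

lemma containsWeak_of_blocks [Fintype P] {n : ℕ} {𝒮 : Finset (Finset (Fin n))} {lev : P → ℕ}
    (hlev : StrictMono lev) (B : ℕ → Finset (Finset (Fin n))) (hB𝒮 : ∀ j, B j ⊆ 𝒮)
    (hcard : ∀ j, #{x | lev x = j} ≤ #(B j)) (hB : ∀ i j, i < j → ∀ S ∈ B i, ∀ T ∈ B j, S ⊂ T) :
    containsWeak 𝒮 P := by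
  have hg : ∀ j, ∃ g : P → Finset (Fin n),
      (({x | lev x = j} : Finset P) : Set P) ⊆ g ⁻¹' B j ∧
        Set.InjOn g ({x | lev x = j} : Finset P) := fun j =>
    (Set.toFinite _).exists_injOn_of_encard_le (by
      rw [Set.encard_coe_eq_coe_finsetCard, Set.encard_coe_eq_coe_finsetCard]
      exact_mod_cast hcard j)
  choose g hgB hginj using hg
  have hlevel : ∀ x, x ∈ (({y | lev y = lev x} : Finset P) : Set P) := fun x => by simp
  have hmem : ∀ x, g (lev x) x ∈ B (lev x) := fun x => hgB (lev x) (hlevel x)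
  have hlt : ∀ x y, lev x < lev y → g (lev x) x ⊂ g (lev y) y :=
    fun x y h => hB _ _ h _ (hmem x) _ (hmem y)
  refine ⟨fun x => g (lev x) x, fun x y hxy => ?_, fun x => hB𝒮 _ (hmem x), fun x y hxy => ?_⟩
  · rcases lt_trichotomy (lev x) (lev y) with h | h | h
    · exact absurd hxy (hlt x y h).ne
    · dsimp only at hxy
      rw [← h] at hxy
      exact hginj (lev x) (hlevel x) (by simpa using h.symm) hxy
    · exact absurd hxy.symm (hlt y x h).ne
  · rcases hxy.eq_or_lt with rfl | h
    exacts [subset_rfl, (hlt x y (hlev h)).subset]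

end Poset

/-- Every subfamily of the `k`-interval chain of size at least
`|P| + (h-1)(3k-5)2^{k-2}` contains `P` as a weak subposet; equivalently
`α(C_k^0,P) ≤ |P| + (h-1)(3k-5)2^{k-2} - 1`. -/
theorem intervalChain_alpha_bound (n k : ℕ) (hk : 2 ≤ k)
    (P : Type*) [PartialOrder P] [Fintype P] (h : ℕ) (hh : isHeight P h)
    (𝒮 : Finset (Finset (Fin n))) (h𝒮 : 𝒮 ⊆ intervalChain n k)
    (hcard : Fintype.card P + (h - 1) * (3 * k - 5) * 2 ^ (k - 2) ≤ 𝒮.card) :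
    containsWeak 𝒮 P := by
  obtain ⟨lev, hlev, hlt⟩ := exists_strictMono_lt_of_isHeight hh
  have hsum : Fintype.card P = ∑ j ∈ range h, #{x | lev x = j} :=
    card_eq_sum_card_fiberwise fun x _ => mem_range.2 (hlt x)
  obtain ⟨B, hB𝒮, hBcard, hB⟩ :=
    exists_blocks hk h 𝒮 h𝒮 (fun j => #{x | lev x = j}) (by rwa [← hsum, ← mul_assoc])
  refine containsWeak_of_blocks hlev B hB𝒮 (fun j => ?_) hB
  rcases lt_or_ge j h with hj | hj
  · exact hBcard j hj
  · simp [filter_eq_empty_iff.2 fun x _ => (hlt x).trans_le hj |>.ne]
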